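/- arXiv:2202.03511 — 2 statements merged into one kernel-verified Lean document; each statement's English description precedes it below -/
import Mathlib

section
/- In a fibration category, homotopy pullbacks can be detected by factoring the other leg: a square (U → X, U → V, X → Y, V → Y) is a homotopy pullback if and only if for any factorization of V → Y as a weak equivalence V → Ṽ followed by a fibration Ṽ ↠ Y, the induced map U → Ṽ ×_Y X is a weak equivalence. -/
open CategoryTheory Limits

universe v u

/-- A fibration category (category of fibrant objects) structure on `C`. -/
structure FibCat (C : Type u) [Category.{v} C] where
  fib : MorphismProperty C
  weq : MorphismProperty C
  weq_comp : ∀ {X Y Z : C} (f : X ⟶ Y) (g : Y ⟶ Z), weq f → weq g → weq (f ≫ g)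
  weq_cancel_left : ∀ {X Y Z : C} (f : X ⟶ Y) (g : Y ⟶ Z), weq f → weq (f ≫ g) → weq g
  weq_cancel_right : ∀ {X Y Z : C} (f : X ⟶ Y) (g : Y ⟶ Z), weq g → weq (f ≫ g) → weq f
  fib_comp : ∀ {X Y Z : C} (f : X ⟶ Y) (g : Y ⟶ Z), fib f → fib g → fib (f ≫ g)
  iso_fib : ∀ {X Y : C} (f : X ⟶ Y), IsIso f → fib f
  iso_weq : ∀ {X Y : C} (f : X ⟶ Y), IsIso f → weq f
  pullback_exists : ∀ {X Y Z : C} (f : X ⟶ Z) (p : Y ⟶ Z), fib p →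
      ∃ (P : C) (fst : P ⟶ X) (snd : P ⟶ Y), IsPullback fst snd f p
  fib_pullback_stable : ∀ {P X Y Z : C} (fst : P ⟶ X) (snd : P ⟶ Y) (f : X ⟶ Z) (p : Y ⟶ Z),
      IsPullback fst snd f p → fib p → fib fst
  acyclicFib_pullback_stable :
      ∀ {P X Y Z : C} (fst : P ⟶ X) (snd : P ⟶ Y) (f : X ⟶ Z) (p : Y ⟶ Z),
      IsPullback fst snd f p → fib p → weq p → fib fst ∧ weq fst
  term : C
  term_isTerminal : IsTerminal term
  all_fibrant : ∀ X : C, fib (term_isTerminal.from X)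
  factor : ∀ {X Y : C} (f : X ⟶ Y),
      ∃ (Z : C) (w : X ⟶ Z) (p : Z ⟶ Y), weq w ∧ fib p ∧ w ≫ p = f

open CategoryTheory Limits

variable {C : Type u} [Category.{v} C]

/-- A commutative square `u₁ ≫ p = u₂ ≫ q` is a homotopy pullback if for any factorization
of the leg `p : X ⟶ Y` as a weak equivalence `w` followed by a fibration `pf`, and any
pullback of `pf` along `q`, the induced comparison map is a weak equivalence. -/
def IsHomotopyPullback (FC : FibCat C) {U X V Y : C}
    (u₁ : U ⟶ X) (u₂ : U ⟶ V) (p : X ⟶ Y) (q : V ⟶ Y) : Prop :=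
  u₁ ≫ p = u₂ ≫ q ∧
  ∀ {Xt : C} (w : X ⟶ Xt) (pf : Xt ⟶ Y), FC.weq w → FC.fib pf → w ≫ pf = p →
    ∀ {P : C} (a : P ⟶ Xt) (b : P ⟶ V), IsPullback a b pf q →
      ∀ k : U ⟶ P, k ≫ a = u₁ ≫ w → k ≫ b = u₂ → FC.weq k

section Auxiliary

/-- Helper to construct `IsPullback` by hand. -/
lemma mk_isPullback {P X Y Z : C} {fst : P ⟶ X} {snd : P ⟶ Y} {f : X ⟶ Z} {g : Y ⟶ Z}
    (eq : fst ≫ f = snd ≫ g)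
    (lift : ∀ {W : C} (a : W ⟶ X) (b : W ⟶ Y), a ≫ f = b ≫ g → (W ⟶ P))
    (fac_left : ∀ {W : C} (a : W ⟶ X) (b : W ⟶ Y) (h : a ≫ f = b ≫ g), lift a b h ≫ fst = a)
    (fac_right : ∀ {W : C} (a : W ⟶ X) (b : W ⟶ Y) (h : a ≫ f = b ≫ g), lift a b h ≫ snd = b)
    (uniq : ∀ {W : C} (a : W ⟶ X) (b : W ⟶ Y) (h : a ≫ f = b ≫ g) (m : W ⟶ P),
      m ≫ fst = a → m ≫ snd = b → m = lift a b h) :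
    IsPullback fst snd f g :=
  IsPullback.of_isLimit (PullbackCone.IsLimit.mk eq
    (fun s => lift s.fst s.snd s.condition)
    (fun s => fac_left _ _ _) (fun s => fac_right _ _ _)
    (fun s m h1 h2 => uniq _ _ _ m h1 h2))

lemma FibCat.weq_id (FC : FibCat C) (X : C) : FC.weq (𝟙 X) :=
  FC.iso_weq _ inferInstance

/-- Key comparison lemma: if a fibration `p` factors through a fibration `ε` via a weak
equivalence `ζ`, then for any base change `w`, the comparison map between the chosen
pullbacks of `p` and `ε` along `w` is a weak equivalence. -/
lemma FibCat.keyComp (FC : FibCat C) {B E F A P Q : C}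
    (p : E ⟶ B) (ε : F ⟶ B) (ζ : E ⟶ F)
    (hp : FC.fib p) (hε : FC.fib ε) (hζ : FC.weq ζ) (hζε : ζ ≫ ε = p)
    (w : A ⟶ B)
    (πA : P ⟶ A) (πE : P ⟶ E) (pbP : IsPullback πA πE w p)
    (πA' : Q ⟶ A) (πF : Q ⟶ F) (pbQ : IsPullback πA' πF w ε)
    (i' : P ⟶ Q) (hi1 : i' ≫ πA' = πA) (hi2 : i' ≫ πF = πE ≫ ζ) :
    FC.weq i' := by
  -- Ω := F ×_B E
  obtain ⟨Ω, ν, ωE, pbΩ⟩ := FC.pullback_exists ε p hp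
  have hν : FC.fib ν := FC.fib_pullback_stable ν ωE ε p pbΩ hp
  have hωE : FC.fib ωE := FC.fib_pullback_stable ωE ν p ε pbΩ.flip hε
  -- c : E ⟶ Ω
  have hcw : ζ ≫ ε = 𝟙 E ≫ p := by rw [hζε, Category.id_comp]
  obtain ⟨c, hc_def⟩ : ∃ y : E ⟶ Ω, y = pbΩ.lift ζ (𝟙 E) hcw := ⟨_, rfl⟩
  have hcν : c ≫ ν = ζ := by rw [hc_def]; exact pbΩ.lift_fst _ _ _
  have hcω : c ≫ ωE = 𝟙 E := by rw [hc_def]; exact pbΩ.lift_snd _ _ _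
  -- factor c
  obtain ⟨EI, cbar, φ, hcbar, hφ, hfac⟩ := FC.factor c
  obtain ⟨d0, hd0_def⟩ : ∃ y : EI ⟶ E, y = φ ≫ ωE := ⟨_, rfl⟩
  have hd0fib : FC.fib d0 := by rw [hd0_def]; exact FC.fib_comp _ _ hφ hωE
  have hcd0 : cbar ≫ d0 = 𝟙 E := by
    rw [hd0_def, ← Category.assoc, hfac, hcω]
  have hd0weq : FC.weq d0 :=
    FC.weq_cancel_left cbar d0 hcbar (by rw [hcd0]; exact FC.weq_id E)
  obtain ⟨Xi, hXi_def⟩ : ∃ y : EI ⟶ F, y = φ ≫ ν := ⟨_, rfl⟩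
  have hXifib : FC.fib Xi := by rw [hXi_def]; exact FC.fib_comp _ _ hφ hν
  have hcXi : cbar ≫ Xi = ζ := by rw [hXi_def, ← Category.assoc, hfac, hcν]
  have hXiweq : FC.weq Xi :=
    FC.weq_cancel_left cbar Xi hcbar (by rw [hcXi]; exact hζ)
  obtain ⟨μ, hμ_def⟩ : ∃ y : EI ⟶ B, y = d0 ≫ p := ⟨_, rfl⟩
  have hμfib : FC.fib μ := by rw [hμ_def]; exact FC.fib_comp _ _ hd0fib hp
  have hXiε : Xi ≫ ε = μ := by
    rw [hXi_def, hμ_def, hd0_def, Category.assoc, pbΩ.w, Category.assoc]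
  -- G := pullback of μ along w
  obtain ⟨G, γA, γI, pbG⟩ := FC.pullback_exists w μ hμfib
  -- g_P : G ⟶ P
  have hgPw : γA ≫ w = (γI ≫ d0) ≫ p := by
    rw [pbG.w, hμ_def, Category.assoc]
  obtain ⟨gP, hgP_def⟩ : ∃ y : G ⟶ P, y = pbP.lift γA (γI ≫ d0) hgPw := ⟨_, rfl⟩
  have hgP1 : gP ≫ πA = γA := by rw [hgP_def]; exact pbP.lift_fst _ _ _
  have hgP2 : gP ≫ πE = γI ≫ d0 := by rw [hgP_def]; exact pbP.lift_snd _ _ _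
  -- top square for g_P
  have TP : IsPullback gP γI πE d0 := by
    apply mk_isPullback (by rw [hgP2])
      (fun {W} a b hab => pbG.lift (a ≫ πA) b
        (by rw [Category.assoc, pbP.w, ← Category.assoc, hab, hμ_def, Category.assoc]))
    · intro W a b hab
      apply pbP.hom_ext
      · rw [Category.assoc, hgP1, pbG.lift_fst]
      · rw [Category.assoc, hgP2, ← Category.assoc, pbG.lift_snd, hab]
    · intro W a b hab
      exact pbG.lift_snd _ _ _
    · intro W a b hab m hm1 hm2
      apply pbG.hom_ext
      · rw [pbG.lift_fst, ← hm1, Category.assoc, hgP1]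
      · rw [pbG.lift_snd, hm2]
  have hgPweq : FC.weq gP :=
    (FC.acyclicFib_pullback_stable gP γI πE d0 TP hd0fib hd0weq).2
  -- g_Q : G ⟶ Q
  have hgQw : γA ≫ w = (γI ≫ Xi) ≫ ε := by
    rw [pbG.w, Category.assoc, hXiε]
  obtain ⟨gQ, hgQ_def⟩ : ∃ y : G ⟶ Q, y = pbQ.lift γA (γI ≫ Xi) hgQw := ⟨_, rfl⟩
  have hgQ1 : gQ ≫ πA' = γA := by rw [hgQ_def]; exact pbQ.lift_fst _ _ _
  have hgQ2 : gQ ≫ πF = γI ≫ Xi := by rw [hgQ_def]; exact pbQ.lift_snd _ _ _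
  have TQ : IsPullback gQ γI πF Xi := by
    apply mk_isPullback (by rw [hgQ2])
      (fun {W} a b hab => pbG.lift (a ≫ πA') b
        (by rw [Category.assoc, pbQ.w, ← Category.assoc, hab, Category.assoc, hXiε]))
    · intro W a b hab
      apply pbQ.hom_ext
      · rw [Category.assoc, hgQ1, pbG.lift_fst]
      · rw [Category.assoc, hgQ2, ← Category.assoc, pbG.lift_snd, hab]
    · intro W a b hab
      exact pbG.lift_snd _ _ _
    · intro W a b hab m hm1 hm2
      apply pbG.hom_ext
      · rw [pbG.lift_fst, ← hm1, Category.assoc, hgQ1]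
      · rw [pbG.lift_snd, hm2]
  have hgQweq : FC.weq gQ :=
    (FC.acyclicFib_pullback_stable gQ γI πF Xi TQ hXifib hXiweq).2
  -- s_G : P ⟶ G
  have hsGw : πA ≫ w = (πE ≫ cbar) ≫ μ := by
    rw [pbP.w, hμ_def, Category.assoc, ← Category.assoc cbar, hcd0, Category.id_comp]
  obtain ⟨sG, hsG_def⟩ : ∃ y : P ⟶ G, y = pbG.lift πA (πE ≫ cbar) hsGw := ⟨_, rfl⟩
  have hsG1 : sG ≫ γA = πA := by rw [hsG_def]; exact pbG.lift_fst _ _ _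
  have hsG2 : sG ≫ γI = πE ≫ cbar := by rw [hsG_def]; exact pbG.lift_snd _ _ _
  have hsGgP : sG ≫ gP = 𝟙 P := by
    apply pbP.hom_ext
    · rw [Category.assoc, hgP1, hsG1, Category.id_comp]
    · rw [Category.assoc, hgP2, ← Category.assoc, hsG2, Category.assoc, hcd0,
        Category.comp_id, Category.id_comp]
  have hsGweq : FC.weq sG :=
    FC.weq_cancel_right sG gP hgPweq (by rw [hsGgP]; exact FC.weq_id P)
  have hiEq : sG ≫ gQ = i' := by
    apply pbQ.hom_ext
    · rw [Category.assoc, hgQ1, hsG1, hi1]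
    · rw [Category.assoc, hgQ2, ← Category.assoc, hsG2, Category.assoc, hcXi, hi2]
  rw [← hiEq]
  exact FC.weq_comp sG gQ hsGweq hgQweq

/-- The pullback of a weak-equivalence section of an acyclic fibration along a fibration
is a weak equivalence. -/
lemma FibCat.sectionCase (FC : FibCat C) {V N Q S : C}
    (i : V ⟶ N) (u : N ⟶ V) (hufib : FC.fib u) (huweq : FC.weq u) (hiu : i ≫ u = 𝟙 V)
    (h : Q ⟶ N) (hh : FC.fib h)
    (sV : S ⟶ V) (sQ : S ⟶ Q) (pbS : IsPullback sV sQ i h) :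
    FC.weq sQ := by
  have hhu : FC.fib (h ≫ u) := FC.fib_comp _ _ hh hufib
  obtain ⟨F4, fN, fQ, pbF⟩ := FC.pullback_exists u (h ≫ u) hhu
  have hfN : FC.fib fN := FC.fib_pullback_stable fN fQ u (h ≫ u) pbF hhu
  have hfQ := FC.acyclicFib_pullback_stable fQ fN (h ≫ u) u pbF.flip hufib huweq
  have hζw : h ≫ u = 𝟙 Q ≫ (h ≫ u) := by rw [Category.id_comp]
  obtain ⟨ζ, hζ_def⟩ : ∃ y : Q ⟶ F4, y = pbF.lift h (𝟙 Q) hζw := ⟨_, rfl⟩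
  have hζN : ζ ≫ fN = h := by rw [hζ_def]; exact pbF.lift_fst _ _ _
  have hζQ : ζ ≫ fQ = 𝟙 Q := by rw [hζ_def]; exact pbF.lift_snd _ _ _
  have hζweq : FC.weq ζ :=
    FC.weq_cancel_right ζ fQ hfQ.2 (by rw [hζQ]; exact FC.weq_id Q)
  have hπFw : (h ≫ u ≫ i) ≫ u = 𝟙 Q ≫ (h ≫ u) := by
    rw [Category.id_comp, Category.assoc, Category.assoc, hiu, Category.comp_id]
  obtain ⟨πF, hπF_def⟩ : ∃ y : Q ⟶ F4, y = pbF.lift (h ≫ u ≫ i) (𝟙 Q) hπFw := ⟨_, rfl⟩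
  have hπF1 : πF ≫ fN = h ≫ u ≫ i := by rw [hπF_def]; exact pbF.lift_fst _ _ _
  have hπF2 : πF ≫ fQ = 𝟙 Q := by rw [hπF_def]; exact pbF.lift_snd _ _ _
  have hkey : ∀ {Z : C} (aZ : Z ⟶ V) (bZ : Z ⟶ F4), aZ ≫ i = bZ ≫ fN →
      (bZ ≫ fQ) ≫ (h ≫ u) = aZ := by
    intro Z aZ bZ hab
    calc (bZ ≫ fQ) ≫ (h ≫ u) = bZ ≫ (fQ ≫ (h ≫ u)) := Category.assoc _ _ _
      _ = bZ ≫ (fN ≫ u) := by rw [pbF.w]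
      _ = (bZ ≫ fN) ≫ u := (Category.assoc _ _ _).symm
      _ = (aZ ≫ i) ≫ u := by rw [hab]
      _ = aZ := by rw [Category.assoc, hiu, Category.comp_id]
  have pbQ' : IsPullback (h ≫ u) πF i fN := by
    apply mk_isPullback (by rw [hπF1, Category.assoc])
      (fun {Z} aZ bZ hab => bZ ≫ fQ)
    · intro Z aZ bZ hab; exact hkey aZ bZ hab
    · intro Z aZ bZ hab
      apply pbF.hom_ext
      · calc ((bZ ≫ fQ) ≫ πF) ≫ fN = (bZ ≫ fQ) ≫ (πF ≫ fN) := Category.assoc _ _ _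
          _ = (bZ ≫ fQ) ≫ ((h ≫ u) ≫ i) := by rw [hπF1, Category.assoc h u i]
          _ = ((bZ ≫ fQ) ≫ (h ≫ u)) ≫ i := (Category.assoc _ _ _).symm
          _ = aZ ≫ i := by rw [hkey aZ bZ hab]
          _ = bZ ≫ fN := hab
      · rw [Category.assoc, hπF2, Category.comp_id]
    · intro Z aZ bZ hab m hm1 hm2
      calc m = m ≫ 𝟙 Q := (Category.comp_id m).symm
        _ = m ≫ (πF ≫ fQ) := by rw [hπF2]
        _ = (m ≫ πF) ≫ fQ := (Category.assoc _ _ _).symm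
        _ = bZ ≫ fQ := by rw [hm2]
  apply FC.keyComp h fN ζ hh hfN hζweq hζN i sV sQ pbS (h ≫ u) πF pbQ' sQ
  · rw [← Category.assoc, ← pbS.w, Category.assoc, hiu, Category.comp_id]
  · apply pbF.hom_ext
    · calc (sQ ≫ πF) ≫ fN = sQ ≫ (πF ≫ fN) := Category.assoc _ _ _
        _ = sQ ≫ (h ≫ u ≫ i) := by rw [hπF1]
        _ = ((sQ ≫ h) ≫ u) ≫ i := by simp only [Category.assoc]
        _ = ((sV ≫ i) ≫ u) ≫ i := by rw [pbS.w]
        _ = sV ≫ i := by rw [Category.assoc sV i u, hiu, Category.comp_id]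
        _ = sQ ≫ h := pbS.w
        _ = sQ ≫ (ζ ≫ fN) := by rw [hζN]
        _ = (sQ ≫ ζ) ≫ fN := (Category.assoc _ _ _).symm
    · rw [Category.assoc, hπF2, Category.assoc, hζQ]

/-- Right properness: the pullback of a weak equivalence along a fibration is a
weak equivalence. -/
lemma FibCat.rightProper (FC : FibCat C) {V T W S : C}
    (v : V ⟶ T) (g : W ⟶ T) (hv : FC.weq v) (hg : FC.fib g)
    (sV : S ⟶ V) (sW : S ⟶ W) (pbS : IsPullback sV sW v g) :
    FC.weq sW := by
  -- product T × T
  obtain ⟨TT, pr1, pr2, pbTT⟩ :=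
    FC.pullback_exists (FC.term_isTerminal.from T) (FC.term_isTerminal.from T)
      (FC.all_fibrant T)
  have hpr1 : FC.fib pr1 := FC.fib_pullback_stable _ _ _ _ pbTT (FC.all_fibrant T)
  have hpr2 : FC.fib pr2 := FC.fib_pullback_stable _ _ _ _ pbTT.flip (FC.all_fibrant T)
  -- path object on T
  obtain ⟨Δ, hΔ_def⟩ : ∃ y : T ⟶ TT, y = pbTT.lift (𝟙 T) (𝟙 T) rfl := ⟨_, rfl⟩
  obtain ⟨PT, σ, ppair, hσ, hppair, hfacΔ⟩ := FC.factor Δ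
  obtain ⟨d0, hd0_def⟩ : ∃ y : PT ⟶ T, y = ppair ≫ pr1 := ⟨_, rfl⟩
  obtain ⟨d1, hd1_def⟩ : ∃ y : PT ⟶ T, y = ppair ≫ pr2 := ⟨_, rfl⟩
  have hd0fib : FC.fib d0 := by rw [hd0_def]; exact FC.fib_comp _ _ hppair hpr1
  have hd1fib : FC.fib d1 := by rw [hd1_def]; exact FC.fib_comp _ _ hppair hpr2
  have hσd0 : σ ≫ d0 = 𝟙 T := by
    rw [hd0_def, ← Category.assoc, hfacΔ, hΔ_def]; exact pbTT.lift_fst _ _ _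
  have hσd1 : σ ≫ d1 = 𝟙 T := by
    rw [hd1_def, ← Category.assoc, hfacΔ, hΔ_def]; exact pbTT.lift_snd _ _ _
  have hd0weq : FC.weq d0 := FC.weq_cancel_left σ d0 hσ (by rw [hσd0]; exact FC.weq_id T)
  -- mapping path space N of v
  obtain ⟨N, uN, nP, pbN⟩ := FC.pullback_exists v d0 hd0fib
  have huN := FC.acyclicFib_pullback_stable uN nP v d0 pbN hd0fib hd0weq
  have hiw : 𝟙 V ≫ v = (v ≫ σ) ≫ d0 := by
    rw [Category.id_comp, Category.assoc, hσd0, Category.comp_id]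
  obtain ⟨i, hi_def⟩ : ∃ y : V ⟶ N, y = pbN.lift (𝟙 V) (v ≫ σ) hiw := ⟨_, rfl⟩
  have hiuN : i ≫ uN = 𝟙 V := by rw [hi_def]; exact pbN.lift_fst _ _ _
  have hinP : i ≫ nP = v ≫ σ := by rw [hi_def]; exact pbN.lift_snd _ _ _
  have hiweq : FC.weq i :=
    FC.weq_cancel_right i uN huN.2 (by rw [hiuN]; exact FC.weq_id V)
  obtain ⟨π, hπ_def⟩ : ∃ y : N ⟶ T, y = nP ≫ d1 := ⟨_, rfl⟩
  have hiπ : i ≫ π = v := by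
    rw [hπ_def, ← Category.assoc, hinP, Category.assoc, hσd1, Category.comp_id]
  have hπweq : FC.weq π := FC.weq_cancel_left i π hiweq (by rw [hiπ]; exact hv)
  -- fibrancy of π via the product V × T
  obtain ⟨VT, pV, pT, pbVT⟩ :=
    FC.pullback_exists (FC.term_isTerminal.from V) (FC.term_isTerminal.from T)
      (FC.all_fibrant T)
  have hpT : FC.fib pT := FC.fib_pullback_stable _ _ _ _ pbVT.flip (FC.all_fibrant V)
  obtain ⟨v1, hv1_def⟩ : ∃ y : VT ⟶ TT, y = pbTT.lift (pV ≫ v) pT (FC.term_isTerminal.hom_ext _ _) := ⟨_, rfl⟩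
  have hv11 : v1 ≫ pr1 = pV ≫ v := by rw [hv1_def]; exact pbTT.lift_fst _ _ _
  have hv12 : v1 ≫ pr2 = pT := by rw [hv1_def]; exact pbTT.lift_snd _ _ _
  obtain ⟨mN, hmN_def⟩ : ∃ y : N ⟶ VT, y = pbVT.lift uN π (FC.term_isTerminal.hom_ext _ _) := ⟨_, rfl⟩
  have hmN1 : mN ≫ pV = uN := by rw [hmN_def]; exact pbVT.lift_fst _ _ _
  have hmN2 : mN ≫ pT = π := by rw [hmN_def]; exact pbVT.lift_snd _ _ _
  have hMcomm : mN ≫ v1 = nP ≫ ppair := by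
    apply pbTT.hom_ext
    · rw [Category.assoc, hv11, ← Category.assoc, hmN1, pbN.w, hd0_def, ← Category.assoc]
    · rw [Category.assoc, hv12, hmN2, hπ_def, hd1_def, ← Category.assoc]
  have pbM : IsPullback mN nP v1 ppair := by
    apply mk_isPullback hMcomm
      (fun {Z} α β hαβ => pbN.lift (α ≫ pV) β
        (by rw [Category.assoc, ← hv11, ← Category.assoc, hαβ, Category.assoc, ← hd0_def]))
    · intro Z α β hαβ
      apply pbVT.hom_ext
      · rw [Category.assoc, hmN1, pbN.lift_fst]
      · rw [Category.assoc, hmN2, hπ_def, ← Category.assoc, pbN.lift_snd, hd1_def,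
          ← Category.assoc, ← hαβ, Category.assoc, hv12]
    · intro Z α β hαβ
      exact pbN.lift_snd _ _ _
    · intro Z α β hαβ m hm1 hm2
      apply pbN.hom_ext
      · rw [pbN.lift_fst, ← hm1, Category.assoc, hmN1]
      · rw [pbN.lift_snd, hm2]
  have hmNfib : FC.fib mN := FC.fib_pullback_stable mN nP v1 ppair pbM hppair
  have hπfib : FC.fib π := by
    rw [← hmN2]; exact FC.fib_comp mN pT hmNfib hpT
  -- QR := pullback of g along π
  obtain ⟨QR, hN, qW, pbQR⟩ := FC.pullback_exists π g hg
  have hhN : FC.fib hN := FC.fib_pullback_stable hN qW π g pbQR hg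
  have hqW := FC.acyclicFib_pullback_stable qW hN g π pbQR.flip hπfib hπweq
  have hs'w : (sV ≫ i) ≫ π = sW ≫ g := by
    rw [Category.assoc, hiπ, pbS.w]
  obtain ⟨s', hs'_def⟩ : ∃ y : S ⟶ QR, y = pbQR.lift (sV ≫ i) sW hs'w := ⟨_, rfl⟩
  have hs'1 : s' ≫ hN = sV ≫ i := by rw [hs'_def]; exact pbQR.lift_fst _ _ _
  have hs'2 : s' ≫ qW = sW := by rw [hs'_def]; exact pbQR.lift_snd _ _ _
  have pbSQ : IsPullback sV s' i hN := by
    apply mk_isPullback (by rw [hs'1])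
      (fun {Z} aZ bZ hab => pbS.lift aZ (bZ ≫ qW)
        (by rw [← hiπ, ← Category.assoc, hab, Category.assoc, pbQR.w, ← Category.assoc]))
    · intro Z aZ bZ hab
      exact pbS.lift_fst _ _ _
    · intro Z aZ bZ hab
      apply pbQR.hom_ext
      · rw [Category.assoc, hs'1, ← Category.assoc, pbS.lift_fst, hab]
      · rw [Category.assoc, hs'2, pbS.lift_snd]
    · intro Z aZ bZ hab m hm1 hm2
      apply pbS.hom_ext
      · rw [pbS.lift_fst, hm1]
      · rw [pbS.lift_snd, ← hm2, Category.assoc, hs'2]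
  have hs'weq : FC.weq s' :=
    FC.sectionCase i uN huN.1 huN.2 hiuN hN hhN sV s' pbSQ
  rw [← hs'2]
  exact FC.weq_comp s' qW hs'weq hqW.2

/-- The bridge: if the comparison condition holds for all factorizations of `p`, then it
also holds for all factorizations of `q`. -/
lemma FibCat.bridge (FC : FibCat C) {U X V Y : C}
    (u₁ : U ⟶ X) (u₂ : U ⟶ V) (p : X ⟶ Y) (q : V ⟶ Y) (hcomm : u₁ ≫ p = u₂ ≫ q)
    (H : ∀ {Xt : C} (w : X ⟶ Xt) (pf : Xt ⟶ Y), FC.weq w → FC.fib pf → w ≫ pf = p →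
      ∀ {P : C} (a : P ⟶ Xt) (b : P ⟶ V), IsPullback a b pf q →
        ∀ k : U ⟶ P, k ≫ a = u₁ ≫ w → k ≫ b = u₂ → FC.weq k) :
    ∀ {Vt : C} (w : V ⟶ Vt) (pf : Vt ⟶ Y), FC.weq w → FC.fib pf → w ≫ pf = q →
      ∀ {P : C} (a : P ⟶ Vt) (b : P ⟶ X), IsPullback a b pf p →
        ∀ k : U ⟶ P, k ≫ a = u₂ ≫ w → k ≫ b = u₁ → FC.weq k := by
  intro Vt w₂ p₂ hw₂ hp₂ hq2 P₂ a b pbP₂ k hka hkb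
  obtain ⟨Xt, w₁, p₁, hw₁, hp₁, hp1⟩ := FC.factor p
  obtain ⟨W, ω₁, ω₂, pbW⟩ := FC.pullback_exists p₁ p₂ hp₂
  have hω₁ : FC.fib ω₁ := FC.fib_pullback_stable ω₁ ω₂ p₁ p₂ pbW hp₂
  have hω₂ : FC.fib ω₂ := FC.fib_pullback_stable ω₂ ω₁ p₂ p₁ pbW.flip hp₁
  obtain ⟨P₁, b₁, a₁, pbP₁⟩ := FC.pullback_exists q p₁ hp₁
  have hk₁w : u₂ ≫ q = (u₁ ≫ w₁) ≫ p₁ := by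
    rw [Category.assoc, hp1, hcomm]
  obtain ⟨k₁, hk₁_def⟩ : ∃ y : U ⟶ P₁, y = pbP₁.lift u₂ (u₁ ≫ w₁) hk₁w := ⟨_, rfl⟩
  have hk₁1 : k₁ ≫ b₁ = u₂ := by rw [hk₁_def]; exact pbP₁.lift_fst _ _ _
  have hk₁2 : k₁ ≫ a₁ = u₁ ≫ w₁ := by rw [hk₁_def]; exact pbP₁.lift_snd _ _ _
  have hk₁weq : FC.weq k₁ := H w₁ p₁ hw₁ hp₁ hp1 a₁ b₁ pbP₁.flip k₁ hk₁2 hk₁1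
  have hsw : a₁ ≫ p₁ = (b₁ ≫ w₂) ≫ p₂ := by
    rw [← pbP₁.w, ← hq2, Category.assoc]
  obtain ⟨s, hs_def⟩ : ∃ y : P₁ ⟶ W, y = pbW.lift a₁ (b₁ ≫ w₂) hsw := ⟨_, rfl⟩
  have hs1 : s ≫ ω₁ = a₁ := by rw [hs_def]; exact pbW.lift_fst _ _ _
  have hs2 : s ≫ ω₂ = b₁ ≫ w₂ := by rw [hs_def]; exact pbW.lift_snd _ _ _
  have hrw : (b ≫ w₁) ≫ p₁ = a ≫ p₂ := by
    rw [Category.assoc, hp1, ← pbP₂.w]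
  obtain ⟨r, hr_def⟩ : ∃ y : P₂ ⟶ W, y = pbW.lift (b ≫ w₁) a hrw := ⟨_, rfl⟩
  have hr1 : r ≫ ω₁ = b ≫ w₁ := by rw [hr_def]; exact pbW.lift_fst _ _ _
  have hr2 : r ≫ ω₂ = a := by rw [hr_def]; exact pbW.lift_snd _ _ _
  have pbs : IsPullback b₁ s w₂ ω₂ := by
    apply mk_isPullback (by rw [hs2])
      (fun {Z} tV tW htv => pbP₁.lift tV (tW ≫ ω₁)
        (by rw [← hq2, ← Category.assoc, htv, Category.assoc, ← pbW.w, ← Category.assoc]))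
    · intro Z tV tW htv
      exact pbP₁.lift_fst _ _ _
    · intro Z tV tW htv
      apply pbW.hom_ext
      · rw [Category.assoc, hs1, pbP₁.lift_snd]
      · rw [Category.assoc, hs2, ← Category.assoc, pbP₁.lift_fst, htv]
    · intro Z tV tW htv m hm1 hm2
      apply pbP₁.hom_ext
      · rw [pbP₁.lift_fst, hm1]
      · rw [pbP₁.lift_snd, ← hm2, Category.assoc, hs1]
  have pbr : IsPullback b r w₁ ω₁ := by
    apply mk_isPullback (by rw [hr1])
      (fun {Z} tX tW htx => pbP₂.lift (tW ≫ ω₂) tX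
        (by rw [Category.assoc, ← pbW.w, ← Category.assoc, ← htx, Category.assoc, hp1]))
    · intro Z tX tW htx
      exact pbP₂.lift_snd _ _ _
    · intro Z tX tW htx
      apply pbW.hom_ext
      · rw [Category.assoc, hr1, ← Category.assoc, pbP₂.lift_snd, htx]
      · rw [Category.assoc, hr2, pbP₂.lift_fst]
    · intro Z tX tW htx m hm1 hm2
      apply pbP₂.hom_ext
      · rw [pbP₂.lift_fst, ← hm2, Category.assoc, hr2]
      · rw [pbP₂.lift_snd, hm1]
  have hsweq : FC.weq s := FC.rightProper w₂ ω₂ hw₂ hω₂ b₁ s pbs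
  have hrweq : FC.weq r := FC.rightProper w₁ ω₁ hw₁ hω₁ b r pbr
  have hkr : k ≫ r = k₁ ≫ s := by
    apply pbW.hom_ext
    · rw [Category.assoc, hr1, Category.assoc, hs1, ← Category.assoc, hkb, hk₁2]
    · rw [Category.assoc, hr2, hka, Category.assoc, hs2, ← Category.assoc, hk₁1]
  have hkrw : FC.weq (k ≫ r) := by
    rw [hkr]; exact FC.weq_comp k₁ s hk₁weq hsweq
  exact FC.weq_cancel_right k r hrweq hkrw

end Auxiliary

/-- Homotopy pullbacks can be detected by factoring the other leg: the square is a homotopy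
pullback iff for any factorization of `q : V ⟶ Y` as a weak equivalence followed by a
fibration and any pullback of the fibration along `p`, the comparison map is a weak
equivalence. -/
theorem stmt_7 (FC : FibCat C) {U X V Y : C}
    (u₁ : U ⟶ X) (u₂ : U ⟶ V) (p : X ⟶ Y) (q : V ⟶ Y) (hcomm : u₁ ≫ p = u₂ ≫ q) :
    IsHomotopyPullback FC u₁ u₂ p q ↔
      (∀ {Vt : C} (w : V ⟶ Vt) (pf : Vt ⟶ Y), FC.weq w → FC.fib pf → w ≫ pf = q →
        ∀ {P : C} (a : P ⟶ Vt) (b : P ⟶ X), IsPullback a b pf p →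
          ∀ k : U ⟶ P, k ≫ a = u₂ ≫ w → k ≫ b = u₁ → FC.weq k) := by
  constructor
  · intro hHP
    exact FC.bridge u₁ u₂ p q hcomm hHP.2
  · intro H
    exact ⟨hcomm, FC.bridge u₂ u₁ q p hcomm.symm H⟩
end

section
/- The pasting lemma for homotopy pullbacks holds in a fibration category: given two horizontally composable commutative squares (A,B,D,E) and (B,C,E,F) between fibrant objects where the right square (B,C,E,F) is a homotopy pullback, the left square is a homotopy pullback if and only if the outer rectangle (A,C,D,F) is. -/
open CategoryTheory Limits

universe v u

open CategoryTheory Limits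

variable {C : Type u} [Category.{v} C]

/-- If one factorization/pullback/comparison witness is a weak equivalence, the square is a
homotopy pullback (independence of choices). -/
lemma hpb_of_good (FC : FibCat C) {U X V Y : C}
    (u₁ : U ⟶ X) (u₂ : U ⟶ V) (p : X ⟶ Y) (q : V ⟶ Y) (comm : u₁ ≫ p = u₂ ≫ q)
    {Xt : C} (w : X ⟶ Xt) (pf : Xt ⟶ Y) (hw : FC.weq w) (hpf : FC.fib pf) (hfac : w ≫ pf = p)
    {P : C} (a : P ⟶ Xt) (b : P ⟶ V) (pb : IsPullback a b pf q)
    (k : U ⟶ P) (hk1 : k ≫ a = u₁ ≫ w) (hk2 : k ≫ b = u₂) (hkw : FC.weq k) :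
    IsHomotopyPullback FC u₁ u₂ p q := by
  refine ⟨comm, ?_⟩
  intro Xt' w' pf' hw' hpf' hfac' P' a' b' pb' k' hk1' hk2'
  -- compare the two factorizations via a pullback of pf, pf'
  obtain ⟨T, t₁, t₂, pbT⟩ := FC.pullback_exists pf pf' hpf'
  have hm : w ≫ pf = w' ≫ pf' := hfac.trans hfac'.symm
  set m : X ⟶ T := pbT.lift w w' hm with hmdef
  obtain ⟨T', w0, q0, hw0, hq0, hfac0⟩ := FC.factor m
  have ht₁ : FC.fib t₁ := FC.fib_pullback_stable t₁ t₂ pf pf' pbT hpf'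
  have ht₂ : FC.fib t₂ := FC.fib_pullback_stable t₂ t₁ pf' pf pbT.flip hpf
  set f₁ : T' ⟶ Xt := q0 ≫ t₁ with hf₁def
  set f₂ : T' ⟶ Xt' := q0 ≫ t₂ with hf₂def
  have hw0f₁ : w0 ≫ f₁ = w := by rw [hf₁def, ← Category.assoc, hfac0, hmdef, pbT.lift_fst]
  have hw0f₂ : w0 ≫ f₂ = w' := by rw [hf₂def, ← Category.assoc, hfac0, hmdef, pbT.lift_snd]
  have hwf₁ : FC.weq f₁ := FC.weq_cancel_left w0 f₁ hw0 (by rw [hw0f₁]; exact hw)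
  have hwf₂ : FC.weq f₂ := FC.weq_cancel_left w0 f₂ hw0 (by rw [hw0f₂]; exact hw')
  have hff₁ : FC.fib f₁ := FC.fib_comp _ _ hq0 ht₁
  have hff₂ : FC.fib f₂ := FC.fib_comp _ _ hq0 ht₂
  have hpf0 : f₁ ≫ pf = f₂ ≫ pf' := by
    rw [hf₁def, hf₂def, Category.assoc, Category.assoc, pbT.w]
  -- side 1: pull f₁ back along a
  obtain ⟨Q, c₁, c₂, pbQ⟩ := FC.pullback_exists a f₁ hff₁
  have hc₁ : FC.weq c₁ := (FC.acyclicFib_pullback_stable c₁ c₂ a f₁ pbQ hff₁ hwf₁).2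
  have pasted : IsPullback c₂ (c₁ ≫ b) (f₁ ≫ pf) q := (pbQ.flip).paste_vert pb
  have hlift0 : (u₁ ≫ w0) ≫ f₁ ≫ pf = u₂ ≫ q := by
    rw [Category.assoc, ← Category.assoc w0 f₁ pf, hw0f₁, hfac]; exact comm
  set k₀ : U ⟶ Q := pasted.lift (u₁ ≫ w0) u₂ hlift0 with hk₀def
  have hk₀c₂ : k₀ ≫ c₂ = u₁ ≫ w0 := pasted.lift_fst _ _ _
  have hk₀c₁b : k₀ ≫ c₁ ≫ b = u₂ := pasted.lift_snd _ _ _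
  have hk₀c₁ : k₀ ≫ c₁ = k := by
    apply pb.hom_ext
    · rw [Category.assoc, pbQ.w, ← Category.assoc, hk₀c₂, Category.assoc, hw0f₁, hk1]
    · rw [Category.assoc, hk₀c₁b, hk2]
  have hk₀w : FC.weq k₀ := FC.weq_cancel_right k₀ c₁ hc₁ (by rw [hk₀c₁]; exact hkw)
  -- side 2: pull f₂ back along a'
  obtain ⟨Q', c₁', c₂', pbQ'⟩ := FC.pullback_exists a' f₂ hff₂
  have hc₁' : FC.weq c₁' := (FC.acyclicFib_pullback_stable c₁' c₂' a' f₂ pbQ' hff₂ hwf₂).2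
  have pasted' : IsPullback c₂' (c₁' ≫ b') (f₁ ≫ pf) q := by
    rw [hpf0]; exact (pbQ'.flip).paste_vert pb'
  -- the two pullbacks of the common cospan are related by an iso
  set φ : Q ⟶ Q' := pasted'.lift c₂ (c₁ ≫ b) pasted.w with hφdef
  set ψ : Q' ⟶ Q := pasted.lift c₂' (c₁' ≫ b') pasted'.w with hψdef
  have hφ1 : φ ≫ c₂' = c₂ := pasted'.lift_fst _ _ _
  have hφ2 : φ ≫ (c₁' ≫ b') = c₁ ≫ b := pasted'.lift_snd _ _ _
  have hψ1 : ψ ≫ c₂ = c₂' := pasted.lift_fst _ _ _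
  have hψ2 : ψ ≫ (c₁ ≫ b) = c₁' ≫ b' := pasted.lift_snd _ _ _
  have hφψ : φ ≫ ψ = 𝟙 Q := by
    apply pasted.hom_ext
    · rw [Category.assoc, hψ1, hφ1, Category.id_comp]
    · rw [Category.assoc, hψ2, hφ2, Category.id_comp]
  have hψφ : ψ ≫ φ = 𝟙 Q' := by
    apply pasted'.hom_ext
    · rw [Category.assoc, hφ1, hψ1, Category.id_comp]
    · rw [Category.assoc, hφ2, hψ2, Category.id_comp]
  have hφiso : IsIso φ := ⟨ψ, hφψ, hψφ⟩
  have hφw : FC.weq φ := FC.iso_weq φ hφiso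
  -- transport k₀ across φ
  have hk₀φ : (k₀ ≫ φ) ≫ c₁' = k' := by
    apply pb'.hom_ext
    · simp only [Category.assoc]
      rw [pbQ'.w, ← Category.assoc φ c₂' f₂, hφ1, ← Category.assoc, hk₀c₂,
        Category.assoc, hw0f₂, hk1']
    · simp only [Category.assoc]
      rw [show φ ≫ c₁' ≫ b' = c₁ ≫ b from hφ2, hk₀c₁b, hk2']
  have : FC.weq ((k₀ ≫ φ) ≫ c₁') := FC.weq_comp _ _ (FC.weq_comp _ _ hk₀w hφw) hc₁'
  rw [hk₀φ] at this
  exact this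

/-- The pasting lemma for homotopy pullbacks: given two horizontally composable commutative
squares where the right square is a homotopy pullback, the left square is a homotopy
pullback iff the outer rectangle is. (In a fibration category every object is fibrant.) -/
theorem stmt_9 (FC : FibCat C) {A B D E F' : C} {Cc : C}
    (a : A ⟶ B) (b : B ⟶ Cc) (d : D ⟶ E) (e : E ⟶ F')
    (vA : A ⟶ D) (vB : B ⟶ E) (vC : Cc ⟶ F')
    (hleft : a ≫ vB = vA ≫ d) (hright : b ≫ vC = vB ≫ e)
    (hpb : IsHomotopyPullback FC b vB vC e) :
    IsHomotopyPullback FC a vA vB d ↔ IsHomotopyPullback FC (a ≫ b) vA vC (d ≫ e) := by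
  -- factor vC and pull back along e
  obtain ⟨Ct, wC, pC, hwC, hpC, hfC⟩ := FC.factor vC
  obtain ⟨E₁, q₂, q₁, pbE⟩ := FC.pullback_exists e pC hpC
  -- pbE : IsPullback q₂ q₁ e pC, so pbE.flip : IsPullback q₁ q₂ pC e
  have hbwC : (b ≫ wC) ≫ pC = vB ≫ e := by rw [Category.assoc, hfC]; exact hright
  set h : B ⟶ E₁ := pbE.flip.lift (b ≫ wC) vB hbwC with hhdef
  have hh1 : h ≫ q₁ = b ≫ wC := pbE.flip.lift_fst _ _ _
  have hh2 : h ≫ q₂ = vB := pbE.flip.lift_snd _ _ _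
  have hhw : FC.weq h := hpb.2 wC pC hwC hpC hfC q₁ q₂ pbE.flip h hh1 hh2
  have hq₂ : FC.fib q₂ := FC.fib_pullback_stable q₂ q₁ e pC pbE hpC
  -- factor h
  obtain ⟨Bt, wB, pB, hwB, hpB, hfB⟩ := FC.factor h
  have hpBw : FC.weq pB := FC.weq_cancel_left wB pB hwB (by rw [hfB]; exact hhw)
  -- pull q₂ back along d
  obtain ⟨D₁, r₂, r₁, pbD⟩ := FC.pullback_exists d q₂ hq₂
  -- pbD : IsPullback r₂ r₁ d q₂
  have pbOuter : IsPullback (r₁ ≫ q₁) r₂ pC (d ≫ e) := (pbD.paste_vert pbE).flip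
  -- pull pB back along r₁
  obtain ⟨P, s₂, s₁, pbP⟩ := FC.pullback_exists r₁ pB hpB
  -- pbP : IsPullback s₂ s₁ r₁ pB
  have hs₂ : FC.weq s₂ := (FC.acyclicFib_pullback_stable s₂ s₁ r₁ pB pbP hpB hpBw).2
  have pbLeft : IsPullback s₁ (s₂ ≫ r₂) (pB ≫ q₂) d := pbP.flip.paste_vert pbD.flip
  have hfibBq : FC.fib (pB ≫ q₂) := FC.fib_comp _ _ hpB hq₂
  have hfacB : wB ≫ pB ≫ q₂ = vB := by rw [← Category.assoc, hfB]; exact hh2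
  -- comparison maps
  have commL : a ≫ vB = vA ≫ d := hleft
  have commO : (a ≫ b) ≫ vC = vA ≫ d ≫ e := by
    rw [Category.assoc, hright, ← Category.assoc, hleft, Category.assoc]
  have hkoutw : ((a ≫ b) ≫ wC) ≫ pC = vA ≫ d ≫ e := by
    rw [Category.assoc, hfC]; exact commO
  set kOut : A ⟶ D₁ := pbOuter.lift ((a ≫ b) ≫ wC) vA hkoutw with hkOutdef
  have hkOut1 : kOut ≫ (r₁ ≫ q₁) = (a ≫ b) ≫ wC := pbOuter.lift_fst _ _ _
  have hkOut2 : kOut ≫ r₂ = vA := pbOuter.lift_snd _ _ _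
  have hkleftw : (a ≫ wB) ≫ pB ≫ q₂ = vA ≫ d := by
    rw [Category.assoc, ← Category.assoc wB, hfB, hh2]; exact hleft
  set kLeft : A ⟶ P := pbLeft.lift (a ≫ wB) vA hkleftw with hkLeftdef
  have hkLeft1 : kLeft ≫ s₁ = a ≫ wB := pbLeft.lift_fst _ _ _
  have hkLeft2 : kLeft ≫ (s₂ ≫ r₂) = vA := pbLeft.lift_snd _ _ _
  -- key relation : kLeft ≫ s₂ = kOut
  have key : kLeft ≫ s₂ = kOut := by
    apply pbD.flip.hom_ext
    · -- compositions with r₁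
      rw [Category.assoc, pbP.w, ← Category.assoc, hkLeft1, Category.assoc, hfB]
      apply pbE.flip.hom_ext
      · rw [Category.assoc a h q₁, hh1, Category.assoc kOut r₁ q₁, hkOut1,
          Category.assoc a b wC]
      · rw [Category.assoc a h q₂, hh2, hleft, Category.assoc kOut r₁ q₂, ← pbD.w,
          ← Category.assoc kOut r₂ d, hkOut2]
    · rw [Category.assoc, hkLeft2, hkOut2]
  constructor
  · intro hL
    have hkLw : FC.weq kLeft :=
      hL.2 wB (pB ≫ q₂) hwB hfibBq hfacB s₁ (s₂ ≫ r₂) pbLeft kLeft hkLeft1 hkLeft2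
    have hkOw : FC.weq kOut := by
      rw [← key]; exact FC.weq_comp _ _ hkLw hs₂
    exact hpb_of_good FC (a ≫ b) vA vC (d ≫ e) commO wC pC hwC hpC hfC
      (r₁ ≫ q₁) r₂ pbOuter kOut hkOut1 hkOut2 hkOw
  · intro hO
    have hkOw : FC.weq kOut :=
      hO.2 wC pC hwC hpC hfC (r₁ ≫ q₁) r₂ pbOuter kOut hkOut1 hkOut2
    have hkLw : FC.weq kLeft :=
      FC.weq_cancel_right kLeft s₂ hs₂ (by rw [key]; exact hkOw)
    exact hpb_of_good FC a vA vB d commL wB (pB ≫ q₂) hwB hfibBq hfacB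
      s₁ (s₂ ≫ r₂) pbLeft kLeft hkLeft1 hkLeft2 hkLw
end
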